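/- For a 2-qubit density matrix ρ with correlation matrix T_ρ given by (T_ρ)_{ij} = Tr(ρ (σ_i ⊗ σ_j)).re (σ_i the Pauli matrices), and a local unitary U = U_A ⊗ U_B, the matrices T_ρᵀ T_ρ and T_{UρU*}ᵀ T_{UρU*} have the same eigenvalues; consequently M(ρ) = M(UρU*), where M(ρ) denotes the sum of the two largest eigenvalues of T_ρᵀ T_ρ. -/

import Mathlib

open Matrix Kronecker
open scoped ComplexOrder

/-- A 4×4 density matrix: positive semidefinite with trace one. -/
def IsDensity (ρ : Matrix (Fin 4) (Fin 4) ℂ) : Prop :=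
  ρ.PosSemidef ∧ ρ.trace = 1

/-- Kronecker product of two 2×2 matrices as a 4×4 matrix, computational-basis order. -/
def kron (A B : Matrix (Fin 2) (Fin 2) ℂ) : Matrix (Fin 4) (Fin 4) ℂ :=
  Matrix.reindex finProdFinEquiv finProdFinEquiv (A ⊗ₖ B)

/-- The Pauli matrices. -/
noncomputable def pauli : Fin 3 → Matrix (Fin 2) (Fin 2) ℂ
  | 0 => !![0, 1; 1, 0]
  | 1 => !![0, -Complex.I; Complex.I, 0]
  | 2 => !![1, 0; 0, -1]

/-- The correlation matrix of a two-qubit state. -/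
noncomputable def corr (ρ : Matrix (Fin 4) (Fin 4) ℂ) : Matrix (Fin 3) (Fin 3) ℝ :=
  Matrix.of fun i j => ((ρ * kron (pauli i) (pauli j)).trace).re

lemma transpose_mul_self_isHermitian (T : Matrix (Fin 3) (Fin 3) ℝ) :
    (Tᵀ * T).IsHermitian := by
  have h := Matrix.isSymm_transpose_mul_self T
  rw [Matrix.IsHermitian, Matrix.conjTranspose_eq_transpose_of_trivial]
  exact h

/-- `M(ρ)`: the sum of the two largest eigenvalues of `T_ρᵀ T_ρ`
(= sum of all three minus the smallest). -/
noncomputable def Mfun (ρ : Matrix (Fin 4) (Fin 4) ℂ) : ℝ :=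
  (∑ i, (transpose_mul_self_isHermitian (corr ρ)).eigenvalues i) -
    Finset.univ.inf' ⟨0, Finset.mem_univ 0⟩
      (transpose_mul_self_isHermitian (corr ρ)).eigenvalues

/-! ### Auxiliary lemmas -/

section Aux

open Polynomial

lemma pauli_herm (j : Fin 3) : (pauli j)ᴴ = pauli j := by
  fin_cases j <;> ext i k <;> fin_cases i <;> fin_cases k <;>
    simp [pauli, Matrix.conjTranspose_apply]

lemma pauli_trace (j : Fin 3) : (pauli j).trace = 0 := by
  fin_cases j <;> simp [pauli, Matrix.trace, Fin.sum_univ_two, Matrix.diag]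

lemma pauli_mul_trace (i j : Fin 3) :
    (pauli i * pauli j).trace = if i = j then 2 else 0 := by
  fin_cases i <;> fin_cases j <;>
    simp [pauli, Matrix.trace, Matrix.mul_apply, Fin.sum_univ_two, Matrix.diag,
      Complex.I_mul_I] <;> norm_num

lemma pauli_expand (M : Matrix (Fin 2) (Fin 2) ℂ) :
    M = (M.trace / 2) • 1 + ∑ j : Fin 3, ((M * pauli j).trace / 2) • pauli j := by
  ext i k
  fin_cases i <;> fin_cases k <;>
    simp [pauli, Matrix.trace, Matrix.mul_apply, Fin.sum_univ_two, Fin.sum_univ_three,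
      Matrix.diag, Matrix.one_apply] <;> ring_nf <;> simp [Complex.I_sq] <;> ring

lemma trace_real {M N : Matrix (Fin 2) (Fin 2) ℂ} (hM : Mᴴ = M) (hN : Nᴴ = N) :
    ((M * N).trace : ℂ) = (((M * N).trace).re : ℝ) := by
  have h : (starRingEnd ℂ) ((M * N).trace) = (M * N).trace := by
    have := Matrix.trace_conjTranspose (M * N)
    rw [Matrix.conjTranspose_mul, hM, hN, Matrix.trace_mul_comm] at this
    simpa using this.symm
  exact (Complex.conj_eq_iff_re.mp h).symm

/-- The rotation matrix associated to conjugation by a unitary. -/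
noncomputable def rotQ (V : Matrix (Fin 2) (Fin 2) ℂ) : Matrix (Fin 3) (Fin 3) ℝ :=
  Matrix.of fun j i => ((V * pauli i * Vᴴ * pauli j).trace).re / 2

lemma conj_pauli {V : Matrix (Fin 2) (Fin 2) ℂ} (hV : V ∈ Matrix.unitaryGroup (Fin 2) ℂ)
    (i : Fin 3) :
    V * pauli i * Vᴴ = ∑ j : Fin 3, ((rotQ V j i : ℝ) : ℂ) • pauli j := by
  have hVV : Vᴴ * V = 1 := by
    simpa [Matrix.star_eq_conjTranspose] using Matrix.mem_unitaryGroup_iff'.mp hV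
  set M := V * pauli i * Vᴴ with hMdef
  have hMh : Mᴴ = M := by
    simp [hMdef, Matrix.conjTranspose_mul, pauli_herm, Matrix.mul_assoc]
  have htr : M.trace = 0 := by
    rw [hMdef, Matrix.trace_mul_cycle, hVV, Matrix.one_mul, pauli_trace]
  have key := pauli_expand M
  rw [htr] at key
  simp only [zero_div, zero_smul, zero_add] at key
  rw [key]
  refine Finset.sum_congr rfl fun j _ => ?_
  congr 1
  rw [trace_real hMh (pauli_herm j)]
  simp [rotQ]
  rfl

lemma rotQ_orth {V : Matrix (Fin 2) (Fin 2) ℂ} (hV : V ∈ Matrix.unitaryGroup (Fin 2) ℂ) :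
    (rotQ V)ᵀ * rotQ V = 1 := by
  have hVV : Vᴴ * V = 1 := by
    simpa [Matrix.star_eq_conjTranspose] using Matrix.mem_unitaryGroup_iff'.mp hV
  have hVV' : ∀ X : Matrix (Fin 2) (Fin 2) ℂ, Vᴴ * (V * X) = X := fun X => by
    rw [← Matrix.mul_assoc, hVV, Matrix.one_mul]
  ext i k
  have h1 : ((V * pauli i * Vᴴ) * (V * pauli k * Vᴴ)).trace = (if i = k then (2:ℂ) else 0) := by
    simp only [Matrix.mul_assoc, hVV']
    rw [Matrix.trace_mul_comm, ← Matrix.mul_assoc, Matrix.mul_assoc, hVV, Matrix.mul_one,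
      pauli_mul_trace]
  have h2 : ((V * pauli i * Vᴴ) * (V * pauli k * Vᴴ)).trace
      = ∑ j : Fin 3, ((rotQ V j i : ℝ) : ℂ) * ((rotQ V j k : ℝ) : ℂ) * 2 := by
    rw [conj_pauli hV i, conj_pauli hV k, Finset.sum_mul_sum]
    simp only [Matrix.trace_sum, Matrix.smul_mul, Matrix.mul_smul, Matrix.trace_smul, smul_smul,
      smul_eq_mul, pauli_mul_trace, mul_ite, mul_zero, Finset.sum_ite_eq, Finset.mem_univ, if_true]
    exact Finset.sum_congr rfl fun j _ => by ring
  have h3 := h1.symm.trans h2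
  have hR : (∑ j : Fin 3, ((rotQ V j i : ℝ) : ℂ) * ((rotQ V j k : ℝ) : ℂ) * 2)
      = (((∑ j : Fin 3, rotQ V j i * rotQ V j k) * 2 : ℝ) : ℂ) := by
    push_cast
    rw [Finset.sum_mul]
  rw [hR] at h3
  have h5 : ((∑ j : Fin 3, rotQ V j i * rotQ V j k) * 2 : ℝ) = if i = k then 2 else 0 := by
    rcases eq_or_ne i k with h | h
    · simp only [h, if_true] at h3 ⊢; exact_mod_cast h3.symm
    · simp only [h, if_false] at h3 ⊢; exact_mod_cast h3.symm
  have h6 : (∑ j : Fin 3, rotQ V j i * rotQ V j k) = if i = k then 1 else 0 := by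
    rcases eq_or_ne i k with h | h <;> simp [h] at h5 ⊢ <;> linarith
  simpa [Matrix.mul_apply, Matrix.one_apply, Matrix.transpose_apply] using h6

lemma kron_mul (A B C D : Matrix (Fin 2) (Fin 2) ℂ) :
    kron A B * kron C D = kron (A * C) (B * D) := by
  simp only [kron, Matrix.reindex_apply, Matrix.submatrix_mul_equiv, Matrix.mul_kronecker_mul]

lemma kron_conjTranspose (A B : Matrix (Fin 2) (Fin 2) ℂ) :
    (kron A B)ᴴ = kron Aᴴ Bᴴ := by
  simp only [kron, Matrix.reindex_apply, Matrix.conjTranspose_submatrix]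
  congr 1
  ext ⟨a, b⟩ ⟨c, d⟩
  simp [Matrix.conjTranspose_apply, Matrix.kroneckerMap_apply]

lemma kron_apply' (A B : Matrix (Fin 2) (Fin 2) ℂ) (i j : Fin 4) :
    kron A B i j = A ((@finProdFinEquiv 2 2).symm i).1 ((@finProdFinEquiv 2 2).symm j).1 *
      B ((@finProdFinEquiv 2 2).symm i).2 ((@finProdFinEquiv 2 2).symm j).2 := rfl

lemma kron_sum_sum (f g : Fin 3 → ℝ) (P Q : Fin 3 → Matrix (Fin 2) (Fin 2) ℂ) :
    kron (∑ k, ((f k : ℝ) : ℂ) • P k) (∑ l, ((g l : ℝ) : ℂ) • Q l)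
      = ∑ k, ∑ l, (((f k * g l : ℝ) : ℂ)) • kron (P k) (Q l) := by
  ext i j
  simp only [kron_apply', Matrix.sum_apply, Matrix.smul_apply, smul_eq_mul, Finset.sum_mul_sum]
  push_cast
  refine Finset.sum_congr rfl fun k _ => Finset.sum_congr rfl fun l _ => ?_
  ring

lemma corr_conj (ρ : Matrix (Fin 4) (Fin 4) ℂ) {UA UB : Matrix (Fin 2) (Fin 2) ℂ}
    (hUA : UA ∈ Matrix.unitaryGroup (Fin 2) ℂ) (hUB : UB ∈ Matrix.unitaryGroup (Fin 2) ℂ) :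
    corr (kron UA UB * ρ * (kron UA UB)ᴴ) = (rotQ UAᴴ)ᵀ * corr ρ * rotQ UBᴴ := by
  have hUA' : UAᴴ ∈ Matrix.unitaryGroup (Fin 2) ℂ := by
    rw [← Matrix.star_eq_conjTranspose]; exact Unitary.star_mem hUA
  have hUB' : UBᴴ ∈ Matrix.unitaryGroup (Fin 2) ℂ := by
    rw [← Matrix.star_eq_conjTranspose]; exact Unitary.star_mem hUB
  ext i j
  have hconj : (kron UA UB)ᴴ * kron (pauli i) (pauli j) * kron UA UB
      = ∑ k, ∑ l, (((rotQ UAᴴ k i * rotQ UBᴴ l j : ℝ) : ℂ)) • kron (pauli k) (pauli l) := by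
    rw [kron_conjTranspose, kron_mul, kron_mul]
    have hA : UAᴴ * pauli i * UA = ∑ k : Fin 3, ((rotQ UAᴴ k i : ℝ) : ℂ) • pauli k := by
      have := conj_pauli hUA' i
      rwa [Matrix.conjTranspose_conjTranspose] at this
    have hB : UBᴴ * pauli j * UB = ∑ l : Fin 3, ((rotQ UBᴴ l j : ℝ) : ℂ) • pauli l := by
      have := conj_pauli hUB' j
      rwa [Matrix.conjTranspose_conjTranspose] at this
    rw [hA, hB, kron_sum_sum]
  have htr : (kron UA UB * ρ * (kron UA UB)ᴴ * kron (pauli i) (pauli j)).trace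
      = (ρ * ((kron UA UB)ᴴ * kron (pauli i) (pauli j) * kron UA UB)).trace := by
    rw [Matrix.mul_assoc (kron UA UB * ρ), Matrix.trace_mul_comm (kron UA UB * ρ),
      ← Matrix.mul_assoc, Matrix.trace_mul_comm _ ρ]
  show ((kron UA UB * ρ * (kron UA UB)ᴴ * kron (pauli i) (pauli j)).trace).re = _
  rw [htr, hconj]
  simp only [Matrix.mul_sum, Matrix.mul_smul, Matrix.trace_sum, Matrix.trace_smul,
    Complex.re_sum, smul_eq_mul, Complex.re_ofReal_mul]
  simp only [Matrix.mul_apply, Matrix.transpose_apply, corr, rotQ, Matrix.of_apply]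
  rw [Finset.sum_comm]
  refine Finset.sum_congr rfl fun k _ => ?_
  rw [Finset.sum_mul]
  refine Finset.sum_congr rfl fun l _ => ?_
  ring

lemma charpoly_conj_inv {n : Type*} [DecidableEq n] [Fintype n] {R : Type*} [CommRing R]
    (P B M : Matrix n n R) (hBP : B * P = 1) (hPB : P * B = 1) :
    (P * M * B).charpoly = M.charpoly := by
  have h1 : (C : R →+* R[X]).mapMatrix P * (C : R →+* R[X]).mapMatrix B = 1 := by
    rw [← _root_.map_mul, hPB, _root_.map_one]
  have hm : charmatrix (P * M * B)
      = (C : R →+* R[X]).mapMatrix P * charmatrix M * (C : R →+* R[X]).mapMatrix B := by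
    rw [charmatrix, charmatrix, Matrix.mul_sub, Matrix.sub_mul]
    congr 1
    · have hc : (C : R →+* R[X]).mapMatrix P * Matrix.scalar n (X : R[X])
          = Matrix.scalar n (X : R[X]) * (C : R →+* R[X]).mapMatrix P :=
        (Matrix.scalar_commute _ (fun r' => Commute.all _ _) _).symm
      rw [hc, Matrix.mul_assoc, h1, Matrix.mul_one]
    · rw [_root_.map_mul, _root_.map_mul]
  have hd : ((C : R →+* R[X]).mapMatrix P).det * ((C : R →+* R[X]).mapMatrix B).det = 1 := by
    rw [← Matrix.det_mul, h1, Matrix.det_one]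
  rw [Matrix.charpoly, Matrix.charpoly, hm, Matrix.det_mul, Matrix.det_mul]
  calc ((C : R →+* R[X]).mapMatrix P).det * (charmatrix M).det
        * ((C : R →+* R[X]).mapMatrix B).det
      = (charmatrix M).det * (((C : R →+* R[X]).mapMatrix P).det
          * ((C : R →+* R[X]).mapMatrix B).det) := by ring
    _ = (charmatrix M).det := by rw [hd, mul_one]

lemma charpoly_diag_eig {f : Fin 3 → ℝ} :
    (Matrix.diagonal f).charpoly = ∏ i, (X - C (f i)) := by
  rw [Matrix.charpoly_of_upperTriangular _ (Matrix.blockTriangular_diagonal f)]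
  simp

lemma herm_charpoly {M : Matrix (Fin 3) (Fin 3) ℝ} (hM : M.IsHermitian) :
    M.charpoly = ∏ i, (X - C (hM.eigenvalues i)) := by
  have hU1 : star (hM.eigenvectorUnitary : Matrix (Fin 3) (Fin 3) ℝ)
      * (hM.eigenvectorUnitary : Matrix (Fin 3) (Fin 3) ℝ) = 1 := by
    simpa using Matrix.mem_unitaryGroup_iff'.mp hM.eigenvectorUnitary.2
  have hU2 : (hM.eigenvectorUnitary : Matrix (Fin 3) (Fin 3) ℝ)
      * star (hM.eigenvectorUnitary : Matrix (Fin 3) (Fin 3) ℝ) = 1 := by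
    simpa using Matrix.mem_unitaryGroup_iff.mp hM.eigenvectorUnitary.2
  conv_lhs => rw [hM.spectral_theorem]
  rw [Unitary.conjStarAlgAut_apply, charpoly_conj_inv _ _ _ hU1 hU2]
  have : (RCLike.ofReal ∘ hM.eigenvalues : Fin 3 → ℝ) = hM.eigenvalues := by
    funext i; simp [RCLike.ofReal]
  rw [this, charpoly_diag_eig]

lemma exists_perm_of_multiset_eq {n : ℕ} {f g : Fin n → ℝ}
    (h : Multiset.map f Finset.univ.val = Multiset.map g Finset.univ.val) :
    ∃ e : Equiv.Perm (Fin n), ∀ i, f i = g (e i) := by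
  have huniv : ∀ (σ : Equiv.Perm (Fin n)), Multiset.map (⇑σ) Finset.univ.val
      = Finset.univ.val := by
    intro σ
    have := Finset.map_univ_equiv σ
    calc Multiset.map (⇑σ) Finset.univ.val = (Finset.univ.map σ.toEmbedding).val := rfl
      _ = Finset.univ.val := by rw [this]
  have hlist : ∀ (h : Fin n → ℝ), ((List.ofFn h : List ℝ) : Multiset ℝ)
      = Multiset.map h Finset.univ.val := by
    intro h
    rw [List.ofFn_eq_map]
    rfl
  set σf := Tuple.sort f
  set σg := Tuple.sort g
  have hperm : (List.ofFn (f ∘ σf)).Perm (List.ofFn (g ∘ σg)) := by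
    rw [← Multiset.coe_eq_coe, hlist, hlist]
    calc Multiset.map (f ∘ σf) Finset.univ.val
        = Multiset.map f (Multiset.map (⇑σf) Finset.univ.val) := by
          rw [Multiset.map_map]
      _ = Multiset.map f Finset.univ.val := by rw [huniv]
      _ = Multiset.map g Finset.univ.val := h
      _ = Multiset.map g (Multiset.map (⇑σg) Finset.univ.val) := by rw [huniv]
      _ = Multiset.map (g ∘ σg) Finset.univ.val := by rw [Multiset.map_map]
  have hsf : (List.ofFn (f ∘ σf)).Pairwise (· ≤ ·) := by
    exact (List.sortedLE_ofFn_iff.mpr (Tuple.monotone_sort f)).pairwise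
  have hsg : (List.ofFn (g ∘ σg)).Pairwise (· ≤ ·) := by
    exact (List.sortedLE_ofFn_iff.mpr (Tuple.monotone_sort g)).pairwise
  have heq : List.ofFn (f ∘ σf) = List.ofFn (g ∘ σg) := List.Perm.eq_of_pairwise' hsf hsg hperm
  have hfun : f ∘ σf = g ∘ σg := List.ofFn_inj.mp heq
  refine ⟨σf.symm.trans σg, fun i => ?_⟩
  have := congrFun hfun (σf.symm i)
  simpa using this

end Aux

/-- local unitaries leave the spectrum of T_ρᵀ T_ρ, and hence M(ρ), invariant. -/
theorem local_unitary_invariance (ρ : Matrix (Fin 4) (Fin 4) ℂ) (hρ : IsDensity ρ)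
    (UA UB : Matrix (Fin 2) (Fin 2) ℂ)
    (hUA : UA ∈ Matrix.unitaryGroup (Fin 2) ℂ) (hUB : UB ∈ Matrix.unitaryGroup (Fin 2) ℂ) :
    (∃ e : Equiv.Perm (Fin 3), ∀ i,
        (transpose_mul_self_isHermitian
            (corr (kron UA UB * ρ * (kron UA UB)ᴴ))).eigenvalues i =
          (transpose_mul_self_isHermitian (corr ρ)).eigenvalues (e i)) ∧
      Mfun (kron UA UB * ρ * (kron UA UB)ᴴ) = Mfun ρ := by
  classical
  have hUA' : UAᴴ ∈ Matrix.unitaryGroup (Fin 2) ℂ := by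
    rw [← Matrix.star_eq_conjTranspose]; exact Unitary.star_mem hUA
  have hUB' : UBᴴ ∈ Matrix.unitaryGroup (Fin 2) ℂ := by
    rw [← Matrix.star_eq_conjTranspose]; exact Unitary.star_mem hUB
  set ρ' := kron UA UB * ρ * (kron UA UB)ᴴ with hρ'def
  set T := corr ρ with hT
  set A := rotQ UAᴴ with hA
  set B := rotQ UBᴴ with hB
  have hAorth : Aᵀ * A = 1 := rotQ_orth hUA'
  have hBorth : Bᵀ * B = 1 := rotQ_orth hUB'
  have hAorth' : A * Aᵀ = 1 := mul_eq_one_comm.mp hAorth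
  have hBorth' : B * Bᵀ = 1 := mul_eq_one_comm.mp hBorth
  have hcorr : corr ρ' = Aᵀ * T * B := corr_conj ρ hUA hUB
  have hsim : (corr ρ')ᵀ * corr ρ' = Bᵀ * (Tᵀ * T) * B := by
    rw [hcorr, Matrix.transpose_mul, Matrix.transpose_mul, Matrix.transpose_transpose]
    calc Bᵀ * (Tᵀ * A) * (Aᵀ * T * B)
        = Bᵀ * (Tᵀ * (A * Aᵀ) * T) * B := by
          simp only [Matrix.mul_assoc]
      _ = Bᵀ * (Tᵀ * T) * B := by rw [hAorth', Matrix.mul_one]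
  have hcp : ((corr ρ')ᵀ * corr ρ').charpoly = (Tᵀ * T).charpoly := by
    rw [hsim]
    exact charpoly_conj_inv _ _ _ hBorth' hBorth
  -- identify eigenvalue multisets
  set f := (transpose_mul_self_isHermitian (corr ρ')).eigenvalues with hf
  set g := (transpose_mul_self_isHermitian T).eigenvalues with hg
  have hprod : (∏ i, (Polynomial.X - Polynomial.C (f i)))
      = ∏ i, (Polynomial.X - Polynomial.C (g i)) := by
    rw [← herm_charpoly (transpose_mul_self_isHermitian (corr ρ')),
      ← herm_charpoly (transpose_mul_self_isHermitian T)]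
    exact hcp
  have hmult : Multiset.map f Finset.univ.val = Multiset.map g Finset.univ.val := by
    have hroots : ∀ (h : Fin 3 → ℝ),
        (∏ i, (Polynomial.X - Polynomial.C (h i))).roots = Multiset.map h Finset.univ.val := by
      intro h
      rw [Finset.prod_eq_multiset_prod]
      rw [show Multiset.map (fun i => Polynomial.X - Polynomial.C (h i)) Finset.univ.val
          = Multiset.map (fun a => Polynomial.X - Polynomial.C a)
              (Multiset.map h Finset.univ.val) by rw [Multiset.map_map]; rfl]
      exact Polynomial.roots_multiset_prod_X_sub_C _
    rw [← hroots f, ← hroots g, hprod]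
  obtain ⟨e, he⟩ := exists_perm_of_multiset_eq hmult
  refine ⟨⟨e, he⟩, ?_⟩
  -- Mfun equality
  show (∑ i, f i) - Finset.univ.inf' ⟨0, Finset.mem_univ 0⟩ f
      = (∑ i, g i) - Finset.univ.inf' ⟨0, Finset.mem_univ 0⟩ g
  have hfe : f = fun i => g (e i) := funext he
  have hsum : (∑ i, f i) = ∑ i, g i := by
    rw [hfe]
    exact Equiv.sum_comp e g
  have hinf : Finset.univ.inf' ⟨0, Finset.mem_univ 0⟩ f
      = Finset.univ.inf' ⟨0, Finset.mem_univ 0⟩ g := by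
    rw [hfe]
    apply le_antisymm
    · refine Finset.le_inf' _ _ fun b _ => ?_
      have := Finset.inf'_le (fun i => g (e i)) (Finset.mem_univ (e.symm b))
      simpa using this
    · refine Finset.le_inf' _ _ fun b _ => ?_
      exact Finset.inf'_le _ (Finset.mem_univ (e b))
  rw [hsum, hinf]
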